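/- arXiv:1710.01295 — 7 statements merged into one kernel-verified Lean document; each statement's English description precedes it below -/
import Mathlib

section
/- For any β > 0 and α ∈ (0,1], the function C(t) = exp(-β t^α) is completely monotonic on [0,∞). -/
open Set

lemma iterWithin_open {f : ℝ → ℝ} {s : Set ℝ} (hs : IsOpen s) {x : ℝ} (hx : x ∈ s) (n : ℕ) :
    iteratedDerivWithin n f s x = iteratedDeriv n f x := by
  rw [iteratedDerivWithin_eq_iteratedFDerivWithin, iteratedDeriv_eq_iteratedFDeriv,
    iteratedFDerivWithin_of_isOpen n hs hx]

lemma key (α β : ℝ) (hα : 0 < α) (hα1 : α ≤ 1) (j : ℕ) :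
    ∃ c : ℕ → ℝ, (∀ k, 0 ≤ c k) ∧ (∀ k, j < k → c k = 0) ∧
      ∀ t : ℝ, 0 < t →
        iteratedDeriv j (fun t => Real.exp (-β * t ^ α)) t
          = (-1:ℝ)^j * (Real.exp (-β * t ^ α) *
              ∑ k ∈ Finset.range (j+1), c k * β^k * t ^ ((k:ℝ)*α - j)) := by
  induction j with
  | zero =>
    refine ⟨fun k => if k = 0 then 1 else 0, ?_, ?_, ?_⟩
    · intro k; dsimp only; split <;> norm_num
    · intro k hk; have : k ≠ 0 := by omega
      simp only [this, if_false]
    · intro t ht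
      simp [Real.rpow_zero]
  | succ j ih =>
    obtain ⟨c, hc0, hcz, hft⟩ := ih
    refine ⟨fun k => c k * ((j:ℝ) - k*α) + α * (if k = 0 then 0 else c (k-1)), ?_, ?_, ?_⟩
    · intro k
      dsimp only
      have hite : 0 ≤ (if k = 0 then 0 else c (k-1)) := by
        split
        · exact le_refl 0
        · exact hc0 _
      have h2 := mul_nonneg hα.le hite
      rcases le_or_gt k j with hk | hk
      · have h1 : (k:ℝ)*α ≤ j := by
          have hkj : (k:ℝ) ≤ j := Nat.cast_le.mpr hk
          nlinarith [Nat.cast_nonneg (α := ℝ) k]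
        have h3 : 0 ≤ c k * ((j:ℝ) - k*α) := mul_nonneg (hc0 k) (by linarith)
        linarith
      · rw [hcz k hk, zero_mul, zero_add]
        exact h2
    · intro k hk
      dsimp only
      rw [hcz k (by omega)]
      have hk0 : ¬ (k = 0) := by omega
      rw [if_neg hk0, hcz (k-1) (by omega)]
      ring
    · intro t ht
      dsimp only
      have ht' : t ≠ 0 := ht.ne'
      have hinner : HasDerivAt (fun t : ℝ => -β * t ^ α) (-β * (α * t ^ (α - 1))) t :=
        (Real.hasDerivAt_rpow_const (Or.inl ht')).const_mul (-β)
      have hexp : HasDerivAt (fun t : ℝ => Real.exp (-β * t ^ α))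
          (Real.exp (-β * t ^ α) * (-β * (α * t ^ (α - 1)))) t := hinner.exp
      have hS : HasDerivAt (fun t : ℝ => ∑ k ∈ Finset.range (j+1), c k * β^k * t ^ ((k:ℝ)*α - j))
          (∑ k ∈ Finset.range (j+1), c k * β^k * (((k:ℝ)*α - j) * t ^ ((k:ℝ)*α - j - 1))) t := by
        apply HasDerivAt.fun_sum
        intro k _
        exact (Real.hasDerivAt_rpow_const (Or.inl ht')).const_mul _
      have hG : HasDerivAt (fun t : ℝ => (-1:ℝ)^j * (Real.exp (-β * t ^ α) *
          ∑ k ∈ Finset.range (j+1), c k * β^k * t ^ ((k:ℝ)*α - j)))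
          ((-1:ℝ)^j * (Real.exp (-β * t ^ α) * (-β * (α * t ^ (α - 1))) *
              (∑ k ∈ Finset.range (j+1), c k * β^k * t ^ ((k:ℝ)*α - j)) +
            Real.exp (-β * t ^ α) *
              ∑ k ∈ Finset.range (j+1), c k * β^k * (((k:ℝ)*α - j) * t ^ ((k:ℝ)*α - j - 1)))) t :=
        (hexp.mul hS).const_mul _
      have heq : iteratedDeriv (j+1) (fun t => Real.exp (-β * t ^ α)) t
          = deriv (iteratedDeriv j (fun t => Real.exp (-β * t ^ α))) t := by
        rw [iteratedDeriv_succ]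
      have hev : (iteratedDeriv j (fun t => Real.exp (-β * t ^ α))) =ᶠ[nhds t]
          (fun t : ℝ => (-1:ℝ)^j * (Real.exp (-β * t ^ α) *
            ∑ k ∈ Finset.range (j+1), c k * β^k * t ^ ((k:ℝ)*α - j))) :=
        Filter.eventuallyEq_of_mem (isOpen_Ioi.mem_nhds ht) (fun x hx => hft x hx)
      rw [heq, hev.deriv_eq, hG.deriv]
      -- split sum on RHS
      have hsum : ∑ k ∈ Finset.range (j+1+1),
          (c k * ((j:ℝ) - k*α) + α * (if k = 0 then 0 else c (k-1))) * β^k * t ^ ((k:ℝ)*α - (j+1:ℕ))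
          = ∑ k ∈ Finset.range (j+1),
              (c k * ((j:ℝ) - k*α) * β^k * t ^ ((k:ℝ)*α - (j+1:ℕ))
               + α * c k * β^(k+1) * t ^ (((k+1:ℕ):ℝ)*α - (j+1:ℕ))) := by
        have hsplit : ∑ k ∈ Finset.range (j+1+1),
            (c k * ((j:ℝ) - k*α) + α * (if k = 0 then 0 else c (k-1))) * β^k * t ^ ((k:ℝ)*α - (j+1:ℕ))
            = (∑ k ∈ Finset.range (j+1+1), c k * ((j:ℝ) - k*α) * β^k * t ^ ((k:ℝ)*α - (j+1:ℕ)))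
              + ∑ k ∈ Finset.range (j+1+1),
                  α * (if k = 0 then 0 else c (k-1)) * β^k * t ^ ((k:ℝ)*α - (j+1:ℕ)) := by
          rw [← Finset.sum_add_distrib]
          exact Finset.sum_congr rfl fun k _ => by ring
        rw [hsplit]
        have hA : (∑ k ∈ Finset.range (j+1+1), c k * ((j:ℝ) - k*α) * β^k * t ^ ((k:ℝ)*α - (j+1:ℕ)))
            = ∑ k ∈ Finset.range (j+1), c k * ((j:ℝ) - k*α) * β^k * t ^ ((k:ℝ)*α - (j+1:ℕ)) := by
          rw [Finset.sum_range_succ, hcz (j+1) (by omega)]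
          ring
        have hB : (∑ k ∈ Finset.range (j+1+1),
              α * (if k = 0 then 0 else c (k-1)) * β^k * t ^ ((k:ℝ)*α - (j+1:ℕ)))
            = ∑ k ∈ Finset.range (j+1), α * c k * β^(k+1) * t ^ (((k+1:ℕ):ℝ)*α - (j+1:ℕ)) := by
          rw [Finset.sum_range_succ']
          simp
        rw [hA, hB, ← Finset.sum_add_distrib]
      rw [hsum]
      simp only [mul_add, Finset.mul_sum, ← Finset.sum_add_distrib, Finset.sum_sub_distrib]
      apply Finset.sum_congr rfl
      intro k hk
      have e1 : t ^ (((k+1:ℕ):ℝ)*α - (j+1:ℕ)) = t ^ (α - 1) * t ^ ((k:ℝ)*α - j) := by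
        rw [← Real.rpow_add ht]
        congr 1
        push_cast
        ring
      have e2 : t ^ ((k:ℝ)*α - j - 1) = t ^ ((k:ℝ)*α - (j+1:ℕ)) := by
        congr 1
        push_cast
        ring
      rw [e1, e2]
      push_cast
      ring

def CompletelyMonotonic (f : ℝ → ℝ) : Prop :=
  ContinuousOn f (Ici 0) ∧ ContDiffOn ℝ (⊤ : ℕ∞) f (Ioi 0) ∧
    ∀ j : ℕ, ∀ t : ℝ, 0 < t → 0 ≤ (-1 : ℝ) ^ j * iteratedDerivWithin j f (Ioi 0) t

theorem stmt2 (α β : ℝ) (hα : 0 < α) (hα1 : α ≤ 1) (hβ : 0 < β) :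
    CompletelyMonotonic (fun t => Real.exp (-β * t ^ α)) := by
  refine ⟨?_, ?_, ?_⟩
  · apply Real.continuous_exp.comp_continuousOn
    apply ContinuousOn.mul continuousOn_const
    intro x _
    exact (Real.continuousAt_rpow_const x α (Or.inr hα.le)).continuousWithinAt
  · intro t ht
    have : ContDiffAt ℝ (⊤ : ℕ∞) (fun t : ℝ => Real.exp (-β * t ^ α)) t := by
      apply Real.contDiff_exp.contDiffAt.comp
      exact contDiffAt_const.mul (Real.contDiffAt_rpow_const_of_ne (ne_of_gt ht))
    exact this.contDiffWithinAt
  · intro j t ht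
    rw [iterWithin_open isOpen_Ioi ht]
    obtain ⟨c, hc0, _, hft⟩ := key α β hα hα1 j
    rw [hft t ht, ← mul_assoc]
    have : ((-1:ℝ)^j * (-1:ℝ)^j) = 1 := by
      rw [← pow_add, ← two_mul, pow_mul]
      norm_num
    rw [this, one_mul]
    apply mul_nonneg (Real.exp_nonneg _)
    apply Finset.sum_nonneg
    intro k _
    exact mul_nonneg (mul_nonneg (hc0 k) (pow_nonneg hβ.le k)) (Real.rpow_nonneg ht.le _)
end

section
/- For any β, ξ > 0 and α ∈ (0,1], the generalized Cauchy function C(t) = (β t^α + 1)^{-ξ/α} is completely monotonic on [0,∞). -/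
open Set

namespace Stmt3Aux

/-- A term `c * t^a * (β t^α + 1)^(-s)` encoded by `(c, a, s)`. -/
noncomputable def term (α β : ℝ) (p : ℝ × ℝ × ℝ) (t : ℝ) : ℝ :=
  p.1 * t ^ p.2.1 * (β * t ^ α + 1) ^ (-p.2.2)

noncomputable def eval (α β : ℝ) (L : List (ℝ × ℝ × ℝ)) (t : ℝ) : ℝ :=
  (L.map fun p => term α β p t).sum

def nstep (α β : ℝ) (p : ℝ × ℝ × ℝ) : List (ℝ × ℝ × ℝ) :=
  [(-(p.1 * p.2.1), p.2.1 - 1, p.2.2), (p.1 * p.2.2 * β * α, p.2.1 + α - 1, p.2.2 + 1)]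

def N (α β : ℝ) (L : List (ℝ × ℝ × ℝ)) : List (ℝ × ℝ × ℝ) := L.flatMap (nstep α β)

def Good (L : List (ℝ × ℝ × ℝ)) : Prop := ∀ p ∈ L, 0 ≤ p.1 ∧ p.2.1 ≤ 0 ∧ 0 ≤ p.2.2

theorem good_N {α β : ℝ} (hα : 0 < α) (hα1 : α ≤ 1) (hβ : 0 < β)
    {L : List (ℝ × ℝ × ℝ)} (hL : Good L) : Good (N α β L) := by
  intro p hp
  rw [N, List.mem_flatMap] at hp
  obtain ⟨q, hq, hpq⟩ := hp
  obtain ⟨hc, ha, hs⟩ := hL q hq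
  simp only [nstep, List.mem_cons, List.mem_singleton, List.not_mem_nil, or_false] at hpq
  rcases hpq with rfl | rfl
  · exact ⟨by dsimp only; nlinarith, by dsimp only; linarith, by dsimp only; exact hs⟩
  · exact ⟨by dsimp only; positivity, by dsimp only; linarith, by dsimp only; linarith⟩

theorem eval_nonneg {α β : ℝ} (hβ : 0 < β) {L : List (ℝ × ℝ × ℝ)} (hL : Good L)
    {t : ℝ} (ht : 0 < t) : 0 ≤ eval α β L t := by
  rw [eval]
  apply List.sum_nonneg
  intro x hx
  rw [List.mem_map] at hx
  obtain ⟨p, hp, rfl⟩ := hx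
  obtain ⟨hc, -, -⟩ := hL p hp
  have h1 : (0:ℝ) < t ^ p.2.1 := Real.rpow_pos_of_pos ht _
  have h2 : (0:ℝ) < (β * t ^ α + 1) ^ (-p.2.2) := by
    apply Real.rpow_pos_of_pos
    nlinarith [Real.rpow_pos_of_pos ht α]
  rw [term]; positivity

theorem hasDerivAt_term {α β : ℝ} (p : ℝ × ℝ × ℝ) {t : ℝ} (ht : 0 < t) (hβ : 0 < β) :
    HasDerivAt (fun u => term α β p u) (-(eval α β (nstep α β p) t)) t := by
  obtain ⟨c, a, s⟩ := p
  have hB : 0 < β * t ^ α + 1 := by nlinarith [Real.rpow_pos_of_pos ht α]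
  have h1 : HasDerivAt (fun u : ℝ => u ^ a) (a * t ^ (a - 1)) t :=
    Real.hasDerivAt_rpow_const (Or.inl ht.ne')
  have h2 : HasDerivAt (fun u : ℝ => β * u ^ α + 1) (β * (α * t ^ (α - 1))) t :=
    (((Real.hasDerivAt_rpow_const (p := α) (Or.inl ht.ne'))).const_mul β).add_const 1
  have h3 : HasDerivAt (fun u : ℝ => (β * u ^ α + 1) ^ (-s))
      (β * (α * t ^ (α - 1)) * (-s) * (β * t ^ α + 1) ^ (-s - 1)) t :=
    h2.rpow_const (Or.inl hB.ne')
  have h4 := (h1.const_mul c).mul h3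
  refine h4.congr_deriv ?_
  have e1 : t ^ (a + α - 1) = t ^ a * t ^ (α - 1) := by
    rw [← Real.rpow_add ht]; ring_nf
  have e2 : (β * t ^ α + 1) ^ (-(s + 1)) = (β * t ^ α + 1) ^ (-s - 1) := by ring_nf
  simp only [eval, nstep, term, List.map_cons, List.map_nil, List.sum_cons, List.sum_nil,
    e1, e2]
  ring

theorem hasDerivAt_eval {α β : ℝ} (L : List (ℝ × ℝ × ℝ)) {t : ℝ} (ht : 0 < t) (hβ : 0 < β) :
    HasDerivAt (fun u => eval α β L u) (-(eval α β (N α β L) t)) t := by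
  induction L with
  | nil => simpa [eval, N] using hasDerivAt_const t (0:ℝ)
  | cons p L ih =>
    have h := (hasDerivAt_term (α := α) p ht hβ).add ih
    have he : (fun u => eval α β (p :: L) u) =
        fun u => term α β p u + eval α β L u := by
      funext u; simp [eval]
    have he2 : -(eval α β (N α β (p :: L)) t) =
        -(eval α β (nstep α β p) t) + -(eval α β (N α β L) t) := by
      simp [eval, N, List.flatMap_cons]
      ring
    rw [he, he2]
    exact h

end Stmt3Aux

open Stmt3Aux in
theorem stmt3 (α β ξ : ℝ) (hα : 0 < α) (hα1 : α ≤ 1) (hβ : 0 < β) (hξ : 0 < ξ) :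
    CompletelyMonotonic (fun t => (β * t ^ α + 1) ^ (-(ξ / α))) := by
  set L0 : List (ℝ × ℝ × ℝ) := [(1, 0, ξ / α)] with hL0
  have goodL0 : Good L0 := by
    intro p hp
    simp only [hL0, List.mem_singleton] at hp
    subst hp
    exact ⟨zero_le_one, le_refl 0, by positivity⟩
  have good_iter : ∀ j : ℕ, Good ((N α β)^[j] L0) := by
    intro j
    induction j with
    | zero => simpa using goodL0
    | succ j ih => rw [Function.iterate_succ_apply']; exact good_N hα hα1 hβ ih
  have key : ∀ j : ℕ, ∀ t ∈ Ioi (0:ℝ),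
      iteratedDerivWithin j (fun t => (β * t ^ α + 1) ^ (-(ξ / α))) (Ioi 0) t
        = (-1 : ℝ) ^ j * eval α β ((N α β)^[j] L0) t := by
    intro j
    induction j with
    | zero =>
      intro t ht
      simp [eval, term, hL0]
    | succ j ih =>
      intro t ht
      rw [iteratedDerivWithin_succ,
        derivWithin_of_isOpen isOpen_Ioi ht]
      have hEq : (fun y => iteratedDerivWithin j
            (fun t => (β * t ^ α + 1) ^ (-(ξ / α))) (Ioi 0) y)
          =ᶠ[nhds t] fun y => (-1 : ℝ) ^ j * eval α β ((N α β)^[j] L0) y := by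
        filter_upwards [isOpen_Ioi.mem_nhds ht] with y hy using ih y hy
      rw [hEq.deriv_eq]
      have hd : HasDerivAt (fun y => (-1 : ℝ) ^ j * eval α β ((N α β)^[j] L0) y)
          ((-1 : ℝ) ^ j * -(eval α β (N α β ((N α β)^[j] L0)) t)) t :=
        (hasDerivAt_eval _ (mem_Ioi.mp ht) hβ).const_mul _
      rw [hd.deriv, Function.iterate_succ_apply']
      ring
  refine ⟨?_, ?_, ?_⟩
  · intro t ht
    have htt : (0:ℝ) ≤ t := ht
    have hB : 0 < β * t ^ α + 1 := by nlinarith [Real.rpow_nonneg htt α]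
    have hin : ContinuousAt (fun t : ℝ => β * t ^ α + 1) t := by
      have h1 : ContinuousAt (fun t : ℝ => t ^ α) t :=
        Real.continuousAt_rpow_const t α (Or.inr hα.le)
      exact (continuousAt_const.mul h1).add continuousAt_const
    exact (hin.rpow_const (Or.inl hB.ne')).continuousWithinAt
  · intro t ht
    have ht' : (0:ℝ) < t := ht
    have hB : 0 < β * t ^ α + 1 := by nlinarith [Real.rpow_pos_of_pos ht' α]
    have hin : ContDiffAt ℝ (⊤ : ℕ∞) (fun t : ℝ => β * t ^ α + 1) t := by
      have h1 : ContDiffAt ℝ (⊤ : ℕ∞) (fun t : ℝ => t ^ α) t :=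
        Real.contDiffAt_rpow_const_of_ne ht'.ne'
      exact (contDiffAt_const.mul h1).add contDiffAt_const
    exact (hin.rpow_const_of_ne hB.ne').contDiffWithinAt
  · intro j t ht
    rw [key j t (mem_Ioi.mpr ht), ← mul_assoc, ← pow_add,
      Even.neg_one_pow ⟨j, rfl⟩, one_mul]
    exact eval_nonneg hβ (good_iter j) ht
end

section
/- Let (X₁, d₁) and (X₂, d₂) be distance spaces with X₁ ∩ X₂ = {x₀}, and let (X₁ ∪ X₂, d) be their 1-sum, defined by d(x,y) = d₁(x,y) if x,y ∈ X₁; d(x,y) = d₂(x,y) if x,y ∈ X₂; and d(x,y) = d₁(x,x₀) + d₂(x₀,y) if x ∈ X₁, y ∈ X₂. If there exist Hilbert spaces H₁, H₂ and maps φᵢ : Xᵢ → Hᵢ with dᵢ(x,y) = ‖φᵢ(x) - φᵢ(y)‖²_{Hᵢ} for i = 1,2, then there exists a Hilbert space H and a map φ : X₁ ∪ X₂ → H with d(x,y) = ‖φ(x) - φ(y)‖²_H for all x, y ∈ X₁ ∪ X₂. -/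
/-!
Translate the two embeddings so that `x₀` goes to `0`, extend each by `0` off its piece, and put
them in the two orthogonal factors of `H₁ × H₂`. By Pythagoras, for `x ∈ A` and `y ∈ B` the squared
distance of the images is `‖φ₁ x - φ₁ x₀‖² + ‖φ₂ x₀ - φ₂ y‖² = d₁ x x₀ + d₂ x₀ y`, which is the 1-sum.
-/

open Set

-- Lifts the Hilbert space to the universe `max u_1 u_2 u_3` required by the statement.
noncomputable instance ULift.instInner {H : Type*} [NormedAddCommGroup H] [InnerProductSpace ℝ H] :
    Inner ℝ (ULift.{u} H) :=
  ⟨fun x y => inner ℝ x.down y.down⟩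

noncomputable instance ULift.innerProductSpace {H : Type*} [NormedAddCommGroup H]
    [InnerProductSpace ℝ H] : InnerProductSpace ℝ (ULift.{u} H) where
  norm_sq_eq_re_inner x := InnerProductSpace.norm_sq_eq_re_inner x.down
  conj_inner_symm x y := InnerProductSpace.conj_inner_symm x.down y.down
  add_left x y z := InnerProductSpace.add_left x.down y.down z.down
  smul_left x y r := InnerProductSpace.smul_left x.down y.down r

structure IsOneSum {X : Type*} (A B : Set X) (x₀ : X) (d₁ d₂ d : X → X → ℝ) : Prop where
  union_eq : A ∪ B = univ
  inter_eq : A ∩ B = {x₀}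
  eq_left : ∀ x ∈ A, ∀ y ∈ A, d x y = d₁ x y
  eq_right : ∀ x ∈ B, ∀ y ∈ B, d x y = d₂ x y
  eq_cross : ∀ x ∈ A, ∀ y ∈ B, x ∉ B → y ∉ A →
    d x y = d₁ x x₀ + d₂ x₀ y ∧ d y x = d₁ x x₀ + d₂ x₀ y

def IsSqrtEmbeddingOn {X E : Type*} [Norm E] [Sub E] (S : Set X) (d : X → X → ℝ) (φ : X → E) :
    Prop :=
  ∀ x ∈ S, ∀ y ∈ S, d x y = ‖φ x - φ y‖ ^ 2

namespace IsOneSum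

variable {X : Type*} {A B : Set X} {x₀ : X} {d₁ d₂ d : X → X → ℝ}

theorem base_mem_left (h : IsOneSum A B x₀ d₁ d₂ d) : x₀ ∈ A :=
  (h.inter_eq.symm ▸ mem_singleton x₀ : x₀ ∈ A ∩ B).1

theorem base_mem_right (h : IsOneSum A B x₀ d₁ d₂ d) : x₀ ∈ B :=
  (h.inter_eq.symm ▸ mem_singleton x₀ : x₀ ∈ A ∩ B).2

theorem eq_base (h : IsOneSum A B x₀ d₁ d₂ d) {x : X} (hA : x ∈ A) (hB : x ∈ B) : x = x₀ := by
  have hx : x ∈ A ∩ B := ⟨hA, hB⟩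
  rwa [h.inter_eq] at hx

theorem mem_or_mem (h : IsOneSum A B x₀ d₁ d₂ d) (x : X) : x ∈ A ∨ x ∈ B :=
  (h.union_eq ▸ mem_univ x : x ∈ A ∪ B)

end IsOneSum

section Wedge

variable {X E F : Type*}

noncomputable def pointedExtend [AddGroup E] (S : Set X) (x₀ : X) (φ : X → E) : X → E :=
  S.indicator fun x => φ x - φ x₀

section AddGroup

variable [AddGroup E] {S T : Set X} {x₀ x y : X} {φ : X → E}

theorem pointedExtend_of_mem (hx : x ∈ S) : pointedExtend S x₀ φ x = φ x - φ x₀ :=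
  indicator_of_mem hx _

theorem pointedExtend_of_mem_of_inter_subset (hST : S ∩ T ⊆ {x₀}) (hx : x ∈ T) :
    pointedExtend S x₀ φ x = 0 := by
  by_cases hxS : x ∈ S
  · rw [pointedExtend_of_mem hxS, hST ⟨hxS, hx⟩, sub_self]
  · exact indicator_of_notMem hxS _

theorem pointedExtend_sub_pointedExtend (hx : x ∈ S) (hy : y ∈ S) :
    pointedExtend S x₀ φ x - pointedExtend S x₀ φ y = φ x - φ y := by
  rw [pointedExtend_of_mem hx, pointedExtend_of_mem hy, sub_sub_sub_cancel_right]

end AddGroup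

noncomputable def wedgeMap [AddGroup E] [AddGroup F] (A B : Set X) (x₀ : X) (φ₁ : X → E)
    (φ₂ : X → F) (x : X) : WithLp 2 (E × F) :=
  WithLp.toLp 2 (pointedExtend A x₀ φ₁ x, pointedExtend B x₀ φ₂ x)

variable [SeminormedAddCommGroup E] [SeminormedAddCommGroup F] {A B : Set X} {x₀ x y : X}
  {φ₁ : X → E} {φ₂ : X → F}

theorem norm_wedgeMap_sub_sq (x y : X) :
    ‖wedgeMap A B x₀ φ₁ φ₂ x - wedgeMap A B x₀ φ₁ φ₂ y‖ ^ 2 =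
      ‖pointedExtend A x₀ φ₁ x - pointedExtend A x₀ φ₁ y‖ ^ 2 +
        ‖pointedExtend B x₀ φ₂ x - pointedExtend B x₀ φ₂ y‖ ^ 2 :=
  WithLp.prod_norm_sq_eq_of_L2 _

theorem norm_wedgeMap_sub_sq_of_mem_left (hAB : A ∩ B ⊆ {x₀}) (hx : x ∈ A) (hy : y ∈ A) :
    ‖wedgeMap A B x₀ φ₁ φ₂ x - wedgeMap A B x₀ φ₁ φ₂ y‖ ^ 2 = ‖φ₁ x - φ₁ y‖ ^ 2 := by
  have hBA : B ∩ A ⊆ {x₀} := inter_comm A B ▸ hAB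
  rw [norm_wedgeMap_sub_sq, pointedExtend_sub_pointedExtend hx hy,
    pointedExtend_of_mem_of_inter_subset hBA hx, pointedExtend_of_mem_of_inter_subset hBA hy]
  simp

theorem norm_wedgeMap_sub_sq_of_mem_right (hAB : A ∩ B ⊆ {x₀}) (hx : x ∈ B) (hy : y ∈ B) :
    ‖wedgeMap A B x₀ φ₁ φ₂ x - wedgeMap A B x₀ φ₁ φ₂ y‖ ^ 2 = ‖φ₂ x - φ₂ y‖ ^ 2 := by
  rw [norm_wedgeMap_sub_sq, pointedExtend_sub_pointedExtend hx hy,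
    pointedExtend_of_mem_of_inter_subset hAB hx, pointedExtend_of_mem_of_inter_subset hAB hy]
  simp

theorem norm_wedgeMap_sub_sq_of_mem_of_mem (hAB : A ∩ B ⊆ {x₀}) (hx : x ∈ A) (hy : y ∈ B) :
    ‖wedgeMap A B x₀ φ₁ φ₂ x - wedgeMap A B x₀ φ₁ φ₂ y‖ ^ 2 =
      ‖φ₁ x - φ₁ x₀‖ ^ 2 + ‖φ₂ x₀ - φ₂ y‖ ^ 2 := by
  have hBA : B ∩ A ⊆ {x₀} := inter_comm A B ▸ hAB
  rw [norm_wedgeMap_sub_sq, pointedExtend_of_mem hx, pointedExtend_of_mem hy,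
    pointedExtend_of_mem_of_inter_subset hAB hy, pointedExtend_of_mem_of_inter_subset hBA hx]
  simp [norm_sub_rev]

end Wedge

namespace IsOneSum

variable {X E F : Type*} [SeminormedAddCommGroup E] [SeminormedAddCommGroup F]
  {A B : Set X} {x₀ : X} {d₁ d₂ d : X → X → ℝ} {φ₁ : X → E} {φ₂ : X → F}

theorem eq_norm_sq_add_norm_sq (h : IsOneSum A B x₀ d₁ d₂ d)
    (hφ₁ : IsSqrtEmbeddingOn A d₁ φ₁) (hφ₂ : IsSqrtEmbeddingOn B d₂ φ₂) {x y : X}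
    (hx : x ∈ A) (hy : y ∈ B) :
    d x y = ‖φ₁ x - φ₁ x₀‖ ^ 2 + ‖φ₂ x₀ - φ₂ y‖ ^ 2 ∧
      d y x = ‖φ₁ x - φ₁ x₀‖ ^ 2 + ‖φ₂ x₀ - φ₂ y‖ ^ 2 := by
  by_cases hxB : x ∈ B
  · obtain rfl := h.eq_base hx hxB
    rw [h.eq_right _ hxB _ hy, h.eq_right _ hy _ hxB, hφ₂ _ hxB _ hy, hφ₂ _ hy _ hxB,
      norm_sub_rev (φ₂ y)]
    simp
  by_cases hyA : y ∈ A
  · obtain rfl := h.eq_base hyA hy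
    rw [h.eq_left _ hx _ hyA, h.eq_left _ hyA _ hx, hφ₁ _ hx _ hyA, hφ₁ _ hyA _ hx,
      norm_sub_rev (φ₁ y)]
    simp
  rw [(h.eq_cross x hx y hy hxB hyA).1, (h.eq_cross x hx y hy hxB hyA).2,
    hφ₁ _ hx _ h.base_mem_left, hφ₂ _ h.base_mem_right _ hy]
  exact ⟨rfl, rfl⟩

theorem isSqrtEmbeddingOn_wedgeMap (h : IsOneSum A B x₀ d₁ d₂ d)
    (hφ₁ : IsSqrtEmbeddingOn A d₁ φ₁) (hφ₂ : IsSqrtEmbeddingOn B d₂ φ₂) :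
    IsSqrtEmbeddingOn univ d (wedgeMap A B x₀ φ₁ φ₂) := by
  have hAB : A ∩ B ⊆ {x₀} := h.inter_eq.subset
  intro x _ y _
  rcases h.mem_or_mem x with hx | hx <;> rcases h.mem_or_mem y with hy | hy
  · rw [h.eq_left x hx y hy, hφ₁ x hx y hy, norm_wedgeMap_sub_sq_of_mem_left hAB hx hy]
  · rw [(h.eq_norm_sq_add_norm_sq hφ₁ hφ₂ hx hy).1, norm_wedgeMap_sub_sq_of_mem_of_mem hAB hx hy]
  · rw [(h.eq_norm_sq_add_norm_sq hφ₁ hφ₂ hy hx).2, norm_sub_rev (wedgeMap A B x₀ φ₁ φ₂ x),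
      norm_wedgeMap_sub_sq_of_mem_of_mem hAB hy hx]
  · rw [h.eq_right x hx y hy, hφ₂ x hx y hy, norm_wedgeMap_sub_sq_of_mem_right hAB hx hy]

end IsOneSum

theorem stmt8_general {X : Type*} (A B : Set X) (x₀ : X)
    (hU : A ∪ B = univ) (hI : A ∩ B = {x₀})
    (d₁ d₂ d : X → X → ℝ)
    -- `d` is the 1-sum of `(A, d₁)` and `(B, d₂)`
    (hdA : ∀ x ∈ A, ∀ y ∈ A, d x y = d₁ x y)
    (hdB : ∀ x ∈ B, ∀ y ∈ B, d x y = d₂ x y)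
    (hdAB : ∀ x ∈ A, ∀ y ∈ B, x ∉ B → y ∉ A →
      d x y = d₁ x x₀ + d₂ x₀ y ∧ d y x = d₁ x x₀ + d₂ x₀ y)
    -- √-embeddings of `(A, d₁)` and `(B, d₂)` into Hilbert spaces
    {H₁ H₂ : Type*} [NormedAddCommGroup H₁] [InnerProductSpace ℝ H₁] [CompleteSpace H₁]
    [NormedAddCommGroup H₂] [InnerProductSpace ℝ H₂] [CompleteSpace H₂]
    (φ₁ : X → H₁) (hφ₁ : ∀ x ∈ A, ∀ y ∈ A, d₁ x y = ‖φ₁ x - φ₁ y‖ ^ 2)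
    (φ₂ : X → H₂) (hφ₂ : ∀ x ∈ B, ∀ y ∈ B, d₂ x y = ‖φ₂ x - φ₂ y‖ ^ 2) :
    ∃ (H : Type (max u_1 u_2 u_3)) (_ : NormedAddCommGroup H) (_ : InnerProductSpace ℝ H)
      (_ : CompleteSpace H) (φ : X → H), ∀ x y, d x y = ‖φ x - φ y‖ ^ 2 := by
  have hφ := IsOneSum.isSqrtEmbeddingOn_wedgeMap ⟨hU, hI, hdA, hdB, hdAB⟩ hφ₁ hφ₂
  exact ⟨ULift.{u_1} (WithLp 2 (H₁ × H₂)), inferInstance, inferInstance, inferInstance,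
    fun x => ULift.up (wedgeMap A B x₀ φ₁ φ₂ x), fun x y => hφ x (mem_univ x) y (mem_univ y)⟩

theorem stmt8 {X : Type*} (A B : Set X) (x₀ : X)
    (hU : A ∪ B = univ) (hI : A ∩ B = {x₀})
    (d₁ d₂ d : X → X → ℝ)
    -- `d₁` is a distance on `A`, `d₂` a distance on `B`
    (h₁symm : ∀ x ∈ A, ∀ y ∈ A, d₁ x y = d₁ y x)
    (h₁nonneg : ∀ x ∈ A, ∀ y ∈ A, 0 ≤ d₁ x y)
    (h₁zero : ∀ x ∈ A, ∀ y ∈ A, (d₁ x y = 0 ↔ x = y))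
    (h₂symm : ∀ x ∈ B, ∀ y ∈ B, d₂ x y = d₂ y x)
    (h₂nonneg : ∀ x ∈ B, ∀ y ∈ B, 0 ≤ d₂ x y)
    (h₂zero : ∀ x ∈ B, ∀ y ∈ B, (d₂ x y = 0 ↔ x = y))
    -- `d` is the 1-sum of `(A, d₁)` and `(B, d₂)`
    (hdA : ∀ x ∈ A, ∀ y ∈ A, d x y = d₁ x y)
    (hdB : ∀ x ∈ B, ∀ y ∈ B, d x y = d₂ x y)
    (hdAB : ∀ x ∈ A, ∀ y ∈ B, x ∉ B → y ∉ A →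
      d x y = d₁ x x₀ + d₂ x₀ y ∧ d y x = d₁ x x₀ + d₂ x₀ y)
    -- √-embeddings of `(A, d₁)` and `(B, d₂)` into Hilbert spaces
    {H₁ H₂ : Type*} [NormedAddCommGroup H₁] [InnerProductSpace ℝ H₁] [CompleteSpace H₁]
    [NormedAddCommGroup H₂] [InnerProductSpace ℝ H₂] [CompleteSpace H₂]
    (φ₁ : X → H₁) (hφ₁ : ∀ x ∈ A, ∀ y ∈ A, d₁ x y = ‖φ₁ x - φ₁ y‖ ^ 2)
    (φ₂ : X → H₂) (hφ₂ : ∀ x ∈ B, ∀ y ∈ B, d₂ x y = ‖φ₂ x - φ₂ y‖ ^ 2) :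
    ∃ (H : Type (max u_1 u_2 u_3)) (_ : NormedAddCommGroup H) (_ : InnerProductSpace ℝ H)
      (_ : CompleteSpace H) (φ : X → H), ∀ x y, d x y = ‖φ x - φ y‖ ^ 2 :=
  stmt8_general A B x₀ hU hI d₁ d₂ d hdA hdB hdAB φ₁ hφ₁ φ₂ hφ₂
end

section
/- Let (X₁,d₁), (X₂,d₂) be distance spaces with X₁ ∩ X₂ = {x₀} and let d be their 1-sum. If d₁ and d₂ are both of negative type on X₁ and X₂ respectively, then d is of negative type on X₁ ∪ X₂: for all points u₁,…,uₙ ∈ X₁ ∪ X₂ and reals c₁,…,cₙ with ∑ cₖ = 0, ∑_{i,j} cᵢ cⱼ d(uᵢ,uⱼ) ≤ 0. -/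
/-!
Let `r_A`, `r_B` be the retractions of `A ∪ B` onto `A` and onto `B` that collapse the other
piece to the gluing point `x₀`. The 1-sum splits as `d x y = d₁ (r_A x) (r_A y) + d₂ (r_B x) (r_B y)`,
so its quadratic form with weights `c` is the sum of the quadratic forms of `d₁` at the points
`r_A uᵢ ∈ A` and of `d₂` at the points `r_B uᵢ ∈ B`, with the same weights `c`.
Both are nonpositive when `∑ cᵢ = 0`.
-/

open Set

open Classical in
noncomputable def retractOnto {X : Type*} (A : Set X) (x₀ x : X) : X := if x ∈ A then x else x₀

section retractOnto

variable {X : Type*} {A B : Set X} {x₀ x : X}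

theorem retractOnto_of_mem (hx : x ∈ A) : retractOnto A x₀ x = x := if_pos hx

theorem retractOnto_of_notMem (hx : x ∉ A) : retractOnto A x₀ x = x₀ := if_neg hx

theorem retractOnto_mem (hx₀ : x₀ ∈ A) (x : X) : retractOnto A x₀ x ∈ A := by
  by_cases hx : x ∈ A
  · rwa [retractOnto_of_mem hx]
  · rwa [retractOnto_of_notMem hx]

theorem retractOnto_eq_of_mem_of_inter_eq (hI : A ∩ B = {x₀}) (hx : x ∈ A) :
    retractOnto B x₀ x = x₀ := by
  by_cases hxB : x ∈ B
  · rw [retractOnto_of_mem hxB]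
    exact (hI ▸ ⟨hx, hxB⟩ : x ∈ ({x₀} : Set X))
  · exact retractOnto_of_notMem hxB

end retractOnto

theorem oneSum_eq_add_comp_retractOnto {X : Type*} {A B : Set X} {x₀ : X} {d₁ d₂ d : X → X → ℝ}
    (hU : A ∪ B = univ) (hI : A ∩ B = {x₀})
    (h₁symm : ∀ y ∈ A, d₁ y x₀ = d₁ x₀ y) (h₂symm : ∀ y ∈ B, d₂ x₀ y = d₂ y x₀)
    (h₁zero : d₁ x₀ x₀ = 0) (h₂zero : d₂ x₀ x₀ = 0)
    (hdA : ∀ x ∈ A, ∀ y ∈ A, d x y = d₁ x y)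
    (hdB : ∀ x ∈ B, ∀ y ∈ B, d x y = d₂ x y)
    (hdAB : ∀ x ∈ A, ∀ y ∈ B, x ∉ B → y ∉ A →
      d x y = d₁ x x₀ + d₂ x₀ y ∧ d y x = d₁ x x₀ + d₂ x₀ y)
    (x y : X) :
    d x y = d₁ (retractOnto A x₀ x) (retractOnto A x₀ y)
      + d₂ (retractOnto B x₀ x) (retractOnto B x₀ y) := by
  have hx₀ : x₀ ∈ A ∩ B := hI ▸ rfl
  have hB_of_notMem : ∀ {z}, z ∉ A → z ∈ B := fun {z} hz =>
    (hU ▸ mem_univ z : z ∈ A ∪ B).resolve_left hz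
  have eq_of_mem_inter : ∀ {z}, z ∈ A → z ∈ B → z = x₀ := fun hA hB =>
    (hI ▸ ⟨hA, hB⟩ : _ ∈ ({x₀} : Set X))
  by_cases hx : x ∈ A <;> by_cases hy : y ∈ A
  · rw [retractOnto_of_mem hx, retractOnto_of_mem hy, retractOnto_eq_of_mem_of_inter_eq hI hx,
      retractOnto_eq_of_mem_of_inter_eq hI hy, hdA x hx y hy, h₂zero, add_zero]
  · rw [retractOnto_of_mem hx, retractOnto_of_notMem hy, retractOnto_eq_of_mem_of_inter_eq hI hx,
      retractOnto_of_mem (hB_of_notMem hy)]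
    by_cases hxB : x ∈ B
    · rw [eq_of_mem_inter hx hxB, hdB x₀ hx₀.2 y (hB_of_notMem hy), h₁zero, zero_add]
    · exact (hdAB x hx y (hB_of_notMem hy) hxB hy).1
  · rw [retractOnto_of_notMem hx, retractOnto_of_mem hy, retractOnto_of_mem (hB_of_notMem hx),
      retractOnto_eq_of_mem_of_inter_eq hI hy]
    by_cases hyB : y ∈ B
    · rw [eq_of_mem_inter hy hyB, hdB x (hB_of_notMem hx) x₀ hx₀.2, h₁zero, zero_add]
    · rw [(hdAB y hy x (hB_of_notMem hx) hyB hx).2, h₁symm y hy, h₂symm x (hB_of_notMem hx)]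
  · rw [retractOnto_of_notMem hx, retractOnto_of_notMem hy, retractOnto_of_mem (hB_of_notMem hx),
      retractOnto_of_mem (hB_of_notMem hy), hdB x (hB_of_notMem hx) y (hB_of_notMem hy), h₁zero,
      zero_add]

theorem stmt9_general {X : Type*} (A B : Set X) (x₀ : X)
    (hU : A ∪ B = univ) (hI : A ∩ B = {x₀})
    (d₁ d₂ d : X → X → ℝ)
    (h₁symm : ∀ x ∈ A, ∀ y ∈ A, d₁ x y = d₁ y x)
    (h₁zero : ∀ x ∈ A, ∀ y ∈ A, (d₁ x y = 0 ↔ x = y))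
    (h₂symm : ∀ x ∈ B, ∀ y ∈ B, d₂ x y = d₂ y x)
    (h₂zero : ∀ x ∈ B, ∀ y ∈ B, (d₂ x y = 0 ↔ x = y))
    -- `d` is the 1-sum of `(A, d₁)` and `(B, d₂)`
    (hdA : ∀ x ∈ A, ∀ y ∈ A, d x y = d₁ x y)
    (hdB : ∀ x ∈ B, ∀ y ∈ B, d x y = d₂ x y)
    (hdAB : ∀ x ∈ A, ∀ y ∈ B, x ∉ B → y ∉ A →
      d x y = d₁ x x₀ + d₂ x₀ y ∧ d y x = d₁ x x₀ + d₂ x₀ y)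
    -- `d₁` and `d₂` are of negative type on `A` and `B` respectively
    (h₁neg : ∀ (n : ℕ) (u : Fin n → X), (∀ i, u i ∈ A) → ∀ c : Fin n → ℝ,
      (∑ i, c i) = 0 → ∑ i, ∑ j, c i * c j * d₁ (u i) (u j) ≤ 0)
    (h₂neg : ∀ (n : ℕ) (u : Fin n → X), (∀ i, u i ∈ B) → ∀ c : Fin n → ℝ,
      (∑ i, c i) = 0 → ∑ i, ∑ j, c i * c j * d₂ (u i) (u j) ≤ 0)
    (n : ℕ) (u : Fin n → X) (c : Fin n → ℝ) (hc : (∑ i, c i) = 0) :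
    ∑ i, ∑ j, c i * c j * d (u i) (u j) ≤ 0 := by
  have hx₀ : x₀ ∈ A ∩ B := hI ▸ rfl
  have hsplit := oneSum_eq_add_comp_retractOnto hU hI
    (fun y hy => h₁symm y hy x₀ hx₀.1) (fun y hy => h₂symm x₀ hx₀.2 y hy)
    ((h₁zero x₀ hx₀.1 x₀ hx₀.1).2 rfl) ((h₂zero x₀ hx₀.2 x₀ hx₀.2).2 rfl) hdA hdB hdAB
  simp only [hsplit, mul_add, Finset.sum_add_distrib]
  exact add_nonpos
    (h₁neg n _ (fun i => retractOnto_mem hx₀.1 (u i)) c hc)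
    (h₂neg n _ (fun i => retractOnto_mem hx₀.2 (u i)) c hc)

theorem stmt9 {X : Type*} (A B : Set X) (x₀ : X)
    (hU : A ∪ B = univ) (hI : A ∩ B = {x₀})
    (d₁ d₂ d : X → X → ℝ)
    (h₁symm : ∀ x ∈ A, ∀ y ∈ A, d₁ x y = d₁ y x)
    (h₁nonneg : ∀ x ∈ A, ∀ y ∈ A, 0 ≤ d₁ x y)
    (h₁zero : ∀ x ∈ A, ∀ y ∈ A, (d₁ x y = 0 ↔ x = y))
    (h₂symm : ∀ x ∈ B, ∀ y ∈ B, d₂ x y = d₂ y x)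
    (h₂nonneg : ∀ x ∈ B, ∀ y ∈ B, 0 ≤ d₂ x y)
    (h₂zero : ∀ x ∈ B, ∀ y ∈ B, (d₂ x y = 0 ↔ x = y))
    -- `d` is the 1-sum of `(A, d₁)` and `(B, d₂)`
    (hdA : ∀ x ∈ A, ∀ y ∈ A, d x y = d₁ x y)
    (hdB : ∀ x ∈ B, ∀ y ∈ B, d x y = d₂ x y)
    (hdAB : ∀ x ∈ A, ∀ y ∈ B, x ∉ B → y ∉ A →
      d x y = d₁ x x₀ + d₂ x₀ y ∧ d y x = d₁ x x₀ + d₂ x₀ y)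
    -- `d₁` and `d₂` are of negative type on `A` and `B` respectively
    (h₁neg : ∀ (n : ℕ) (u : Fin n → X), (∀ i, u i ∈ A) → ∀ c : Fin n → ℝ,
      (∑ i, c i) = 0 → ∑ i, ∑ j, c i * c j * d₁ (u i) (u j) ≤ 0)
    (h₂neg : ∀ (n : ℕ) (u : Fin n → X), (∀ i, u i ∈ B) → ∀ c : Fin n → ℝ,
      (∑ i, c i) = 0 → ∑ i, ∑ j, c i * c j * d₂ (u i) (u j) ≤ 0)
    (n : ℕ) (u : Fin n → X) (c : Fin n → ℝ) (hc : (∑ i, c i) = 0) :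
    ∑ i, ∑ j, c i * c j * d (u i) (u j) ≤ 0 :=
  stmt9_general A B x₀ hU hI d₁ d₂ d h₁symm h₁zero h₂symm h₂zero hdA hdB hdAB h₁neg h₂neg n u c hc
end

section
/- Let k ≥ 2 and let Σ' be the k×k real symmetric matrix whose first (k-1)×(k-1) principal block has diagonal entries a and off-diagonal entries b, whose last row and column (excluding the diagonal) have entries c, and whose last diagonal entry is a. Then det(Σ') = (a - b)^{k-2} (a² + (k-2)ab - (k-1)c²). -/
/-!
Write `Σ' = (a - b) • 1 + F (p i) (p j)` with `F = !![b, c; c, b]` and `p : Fin k → Fin 2` sending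
the first `k - 1` indices to `0` and the last one to `1`. The second summand factors through
`Fin 2`, so the rectangular form of `det (t • 1 + U V) = t ^ (m - n) * det (t • 1 + V U)` turns
`det Σ'` into `(a - b) ^ (k - 2)` times a `2 × 2` determinant whose columns are weighted by the
fibre sizes `k - 1` and `1` of `p`.
-/

open Matrix Finset

namespace Matrix

variable {R m n : Type*} [CommRing R] [Fintype m] [Fintype n] [DecidableEq n]

theorem det_scalar_sub_mul_comm_of_le [DecidableEq m] (A : Matrix m n R) (B : Matrix n m R)
    (hle : Fintype.card n ≤ Fintype.card m) (t : R) :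
    (scalar m t - A * B).det =
      t ^ (Fintype.card m - Fintype.card n) * (scalar n t - B * A).det := by
  simpa [eval_charpoly] using congrArg (Polynomial.eval t) (charpoly_mul_comm_of_le A B hle)

theorem submatrix_mul_one_submatrix (F : Matrix n n R) (p : m → n) :
    F.submatrix id p * (1 : Matrix n n R).submatrix p id =
      F * diagonal fun u => (Fintype.card {j // p j = u} : R) := by
  ext s u
  rw [mul_diagonal]
  simp only [mul_apply, submatrix_apply, id, one_apply, mul_ite, mul_one, mul_zero,
    sum_ite, sum_const_zero, add_zero]
  rw [sum_congr rfl fun j hj => by rw [(mem_filter.1 hj).2], sum_const, nsmul_eq_mul,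
    mul_comm, Fintype.card_subtype]

theorem det_scalar_add_submatrix [DecidableEq m] (F : Matrix n n R) (p : m → n)
    (hle : Fintype.card n ≤ Fintype.card m) (t : R) :
    (scalar m t + F.submatrix p p).det = t ^ (Fintype.card m - Fintype.card n) *
      (scalar n t + F * diagonal fun u => (Fintype.card {j // p j = u} : R)).det := by
  have hfactor : F.submatrix p p = (1 : Matrix n n R).submatrix p id * F.submatrix id p := by
    ext
    simp [mul_apply, one_apply]
  rw [← submatrix_mul_one_submatrix, hfactor, ← sub_neg_eq_add, ← Matrix.neg_mul,
    det_scalar_sub_mul_comm_of_le _ _ hle, Matrix.mul_neg, sub_neg_eq_add]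

end Matrix

def starBlock (k : ℕ) (i : Fin k) : Fin 2 :=
  if i.val < k - 1 then 0 else 1

theorem starBlock_eq_zero_iff {k : ℕ} (i : Fin k) : starBlock k i = 0 ↔ i.val < k - 1 := by
  by_cases h : i.val < k - 1 <;> simp [starBlock, h]

theorem starBlock_eq_one_iff {k : ℕ} (i : Fin k) : starBlock k i = 1 ↔ ¬ i.val < k - 1 := by
  by_cases h : i.val < k - 1 <;> simp [starBlock, h]

theorem card_starBlock_eq_zero (k : ℕ) : Fintype.card {i // starBlock k i = 0} = k - 1 := by
  rw [Fintype.card_subtype]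
  simp only [starBlock_eq_zero_iff]
  rw [Fin.card_filter_val_lt]
  omega

theorem card_starBlock_eq_one {k : ℕ} (hk : 1 ≤ k) : Fintype.card {i // starBlock k i = 1} = 1 := by
  have hsplit := card_filter_add_card_filter_not (s := univ) fun i : Fin k => i.val < k - 1
  rw [Fin.card_filter_val_lt, card_univ, Fintype.card_fin] at hsplit
  rw [Fintype.card_subtype]
  simp only [starBlock_eq_one_iff]
  omega

theorem of_star_eq_scalar_add_submatrix (k : ℕ) (a b c : ℝ) :
    Matrix.of (fun i j : Fin k =>
      if i = j then a else if i.val < k - 1 ∧ j.val < k - 1 then b else c) =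
      scalar (Fin k) (a - b) + (!![b, c; c, b]).submatrix (starBlock k) (starBlock k) := by
  ext i j
  by_cases hij : i = j
  · subst hij
    by_cases hi : i.val < k - 1 <;> simp [starBlock, hi]
  · have hnot_both_last : ¬ (k - 1 ≤ i.val ∧ k - 1 ≤ j.val) := fun h => hij (Fin.ext (by omega))
    by_cases hi : i.val < k - 1 <;> by_cases hj : j.val < k - 1 <;>
      simp [starBlock, hij, hi, hj]
    omega

theorem stmt14 (k : ℕ) (hk : 2 ≤ k) (a b c : ℝ) :
    (Matrix.of (fun i j : Fin k =>
        if i = j then a else if i.val < k - 1 ∧ j.val < k - 1 then b else c)).det =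
      (a - b) ^ (k - 2) * (a ^ 2 + (k - 2 : ℝ) * a * b - (k - 1 : ℝ) * c ^ 2) := by
  rw [of_star_eq_scalar_add_submatrix, det_scalar_add_submatrix _ _ (by simpa using hk),
    Fintype.card_fin, Fintype.card_fin, det_fin_two]
  congr 1
  simp [vecMul_diagonal, card_starBlock_eq_zero, card_starBlock_eq_one (by omega : 1 ≤ k),
    Nat.cast_sub (by omega : 1 ≤ k)]
  ring
end

section
/- Suppose a, b, c are real numbers such that for every n ≥ 2 the (n+1)×(n+1) matrix Σ with Σ_{ij} = a if i=j, Σ_{ij} = b if i≠j and i,j ≤ n, and Σ_{ij} = c otherwise, is positive semi-definite. Then b ≥ 0 (i.e., -a/(n-1) ≤ b for every n forces b ≥ 0 given a ≥ 0) and a·b ≥ c². -/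
/-!
Testing `Σ` against the vector equal to `t` at the `n` edge points and to `s` at the centre gives
`n (a + (n - 1) b) t² + 2 n c t s + a s² ≥ 0` for all `t, s`. The coefficient of `t²` gives
`n (-b) ≤ a - b`, and the discriminant gives `n (c² - a b) ≤ a² - a b`. Both hold for every
`n ≥ 2`, so letting `n → ∞` yields `b ≥ 0` and `c² ≤ a b`.
-/

open Matrix

def starCovariance (n : ℕ) (a b c : ℝ) : Matrix (Fin (n + 1)) (Fin (n + 1)) ℝ :=
  Matrix.of fun i j => if i = j then a else if i.val < n ∧ j.val < n then b else c

def starVector (n : ℕ) (t s : ℝ) : Fin (n + 1) → ℝ :=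
  Fin.snoc (fun _ : Fin n => t) s

theorem Fintype.sum_ite_eq_add_mul {ι R : Type*} [Fintype ι] [DecidableEq ι] [CommRing R]
    (k : ι) (a b : R) :
    ∑ j, (if k = j then a else b) = a + (Fintype.card ι - 1) * b := by
  have hsplit : ∀ j, (if k = j then a else b) = b + if k = j then a - b else 0 := by
    intro j; split_ifs <;> ring
  simp only [hsplit, Finset.sum_add_distrib, Finset.sum_const, Finset.card_univ, nsmul_eq_mul,
    Finset.sum_ite_eq, Finset.mem_univ, if_true]
  ring

section starCovariance

variable {n : ℕ} {a b c : ℝ}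

theorem starCovariance_castSucc_castSucc (i j : Fin n) :
    starCovariance n a b c i.castSucc j.castSucc = if i = j then a else b := by
  simp [starCovariance, Fin.castSucc_inj]

theorem starCovariance_castSucc_last (i : Fin n) :
    starCovariance n a b c i.castSucc (Fin.last n) = c := by
  simp [starCovariance, (Fin.castSucc_lt_last i).ne]

theorem starCovariance_last_castSucc (j : Fin n) :
    starCovariance n a b c (Fin.last n) j.castSucc = c := by
  simp [starCovariance, (Fin.castSucc_lt_last j).ne']

theorem starCovariance_last_last : starCovariance n a b c (Fin.last n) (Fin.last n) = a := by
  simp [starCovariance]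

theorem starCovariance_mulVec_castSucc (t s : ℝ) (k : Fin n) :
    (starCovariance n a b c *ᵥ starVector n t s) k.castSucc = (a + (n - 1) * b) * t + c * s := by
  simp only [mulVec, dotProduct, Fin.sum_univ_castSucc, starCovariance_castSucc_castSucc,
    starCovariance_castSucc_last, starVector, Fin.snoc_castSucc, Fin.snoc_last]
  rw [← Finset.sum_mul, Fintype.sum_ite_eq_add_mul, Fintype.card_fin]

theorem starCovariance_mulVec_last (t s : ℝ) :
    (starCovariance n a b c *ᵥ starVector n t s) (Fin.last n) = n * c * t + a * s := by
  simp only [mulVec, dotProduct, Fin.sum_univ_castSucc, starCovariance_last_castSucc,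
    starCovariance_last_last, starVector, Fin.snoc_castSucc, Fin.snoc_last, Finset.sum_const,
    Finset.card_univ, Fintype.card_fin, nsmul_eq_mul]
  ring

theorem starVector_dotProduct_starCovariance_mulVec (t s : ℝ) :
    starVector n t s ⬝ᵥ (starCovariance n a b c *ᵥ starVector n t s) =
      n * (a + (n - 1) * b) * t ^ 2 + 2 * n * c * t * s + a * s ^ 2 := by
  simp only [dotProduct, Fin.sum_univ_castSucc, starCovariance_mulVec_castSucc,
    starCovariance_mulVec_last]
  simp only [starVector, Fin.snoc_castSucc, Fin.snoc_last, Finset.sum_const,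
    Finset.card_univ, Fintype.card_fin, nsmul_eq_mul]
  ring

end starCovariance

theorem nonpos_of_forall_nat_mul_le {x C : ℝ} (N : ℕ) (h : ∀ n : ℕ, N ≤ n → n * x ≤ C) :
    x ≤ 0 := by
  by_contra! hx
  obtain ⟨m, hm⟩ := exists_nat_gt (C / x)
  have hmN : (m : ℝ) ≤ (max N m : ℕ) := by exact_mod_cast le_max_right N m
  have hle := h (max N m) (le_max_left N m)
  rw [div_lt_iff₀ hx] at hm
  nlinarith

namespace Matrix.PosSemidef

variable {n : ℕ} {a b c : ℝ}

theorem starCovariance_quadForm_nonneg (h : (starCovariance n a b c).PosSemidef) (t s : ℝ) :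
    0 ≤ n * (a + (n - 1) * b) * t ^ 2 + 2 * n * c * t * s + a * s ^ 2 := by
  simpa [starVector_dotProduct_starCovariance_mulVec] using
    h.dotProduct_mulVec_nonneg (starVector n t s)

theorem starCovariance_row_nonneg (h : (starCovariance n a b c).PosSemidef) (hn : 0 < n) :
    0 ≤ a + (n - 1) * b := by
  refine (mul_nonneg_iff_of_pos_left (Nat.cast_pos.mpr hn : (0 : ℝ) < n)).mp ?_
  simpa using h.starCovariance_quadForm_nonneg 1 0

theorem starCovariance_cross_sq_le (h : (starCovariance n a b c).PosSemidef) (hn : 0 < n) :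
    n * c ^ 2 ≤ a * (a + (n - 1) * b) := by
  have hdisc := discrim_le_zero (a := n * (a + (n - 1) * b)) (b := 2 * n * c) (c := a) fun t =>
    (h.starCovariance_quadForm_nonneg t 1).trans_eq (by ring)
  rw [discrim] at hdisc
  nlinarith [(Nat.cast_pos.mpr hn : (0 : ℝ) < n)]

end Matrix.PosSemidef

theorem stmt15 (a b c : ℝ)
    (h : ∀ n : ℕ, 2 ≤ n →
      (Matrix.of (fun i j : Fin (n + 1) =>
        if i = j then a else if i.val < n ∧ j.val < n then b else c)).PosSemidef) :
    0 ≤ b ∧ c ^ 2 ≤ a * b := by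
  have hpsd (n : ℕ) (hn : 2 ≤ n) : (starCovariance n a b c).PosSemidef := h n hn
  have hrow (n : ℕ) (hn : 2 ≤ n) : n * -b ≤ a - b := by
    linarith [(hpsd n hn).starCovariance_row_nonneg (by omega)]
  have hcross (n : ℕ) (hn : 2 ≤ n) : n * (c ^ 2 - a * b) ≤ a ^ 2 - a * b := by
    linarith [(hpsd n hn).starCovariance_cross_sq_le (by omega)]
  constructor
  · linarith [nonpos_of_forall_nat_mul_le 2 hrow]
  · linarith [nonpos_of_forall_nat_mul_le 2 hcross]
end

section
/- Let C : [0,∞) → ℝ be a nonnegative function satisfying C(0) ≥ 0 and C(0)·C(2t) ≥ C(t)² for all t > 0. If there exists t₁ > 0 such that C(t) = 0 for all t > t₁, then C(t) = 0 for all t > 0. -/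
/-! If `C (2 * t) = 0` then `C t ^ 2 ≤ C 0 * C (2 * t) = 0` forces `C t = 0`; since finitely many
doublings carry any `t > 0` beyond `t₁`, the vanishing propagates down to every `t > 0`. -/

lemma forall_pos_of_forall_gt_of_two_mul {P : ℝ → Prop} (t₁ : ℝ) (hlarge : ∀ t, t₁ < t → P t)
    (hdouble : ∀ t, 0 < t → P (2 * t) → P t) : ∀ t, 0 < t → P t := by
  suffices h : ∀ n : ℕ, ∀ t, 0 < t → t₁ < 2 ^ n * t → P t by
    intro t ht
    obtain ⟨n, hn⟩ := pow_unbounded_of_one_lt (t₁ / t) one_lt_two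
    exact h n t ht ((div_lt_iff₀ ht).mp hn)
  intro n
  induction n with
  | zero => simpa using fun t _ => hlarge t
  | succ n ih =>
    intro t ht hn
    exact hdouble t ht (ih (2 * t) (by positivity) (by rwa [pow_succ, mul_assoc] at hn))

theorem stmt16_general (C : ℝ → ℝ)
    (hineq : ∀ t : ℝ, 0 < t → C t ^ 2 ≤ C 0 * C (2 * t))
    (t₁ : ℝ) (hvanish : ∀ t, t₁ < t → C t = 0) :
    ∀ t : ℝ, 0 < t → C t = 0 := by
  refine forall_pos_of_forall_gt_of_two_mul t₁ hvanish fun t ht h2t => ?_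
  have hsq : C t ^ 2 ≤ 0 := by simpa [h2t] using hineq t ht
  exact pow_eq_zero_iff two_ne_zero |>.mp (le_antisymm hsq (sq_nonneg _))

theorem stmt16 (C : ℝ → ℝ) (hnonneg : ∀ t, 0 ≤ t → 0 ≤ C t)
    (hineq : ∀ t : ℝ, 0 < t → C t ^ 2 ≤ C 0 * C (2 * t))
    (t₁ : ℝ) (ht₁ : 0 < t₁) (hvanish : ∀ t, t₁ < t → C t = 0) :
    ∀ t : ℝ, 0 < t → C t = 0 :=
  stmt16_general C hineq t₁ hvanish
end
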